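/- If T = O_B⁻¹ O_C where O_B and O_C are the (invertible) observability matrices of the observable pairs (A, Bᵀ) and (A, C) respectively, with A ∈ ℝ^{n×n}, B ∈ ℝ^{n×1}, C ∈ ℝ^{1×n}, and if additionally A satisfies its own characteristic polynomial so that BᵀA^n and CA^n are determined by lower powers, then Bᵀ T = C and T A = A T. -/
import Mathlib


open Matrix BigOperators

def obsMat (n : ℕ) (A : Matrix (Fin n) (Fin n) ℝ) (c : Fin n → ℝ) :
    Matrix (Fin n) (Fin n) ℝ :=
  Matrix.of fun k i => (c ᵥ* A ^ (k : ℕ)) i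

noncomputable def shiftS (n : ℕ) (c : Fin n → ℝ) : Matrix (Fin n) (Fin n) ℝ :=
  Matrix.of fun k i => if h : (k : ℕ) + 1 < n then (if i = ⟨(k : ℕ) + 1, h⟩ then 1 else 0) else c i

lemma shift_mul (n : ℕ) (A : Matrix (Fin n) (Fin n) ℝ) (c : Fin n → ℝ)
    (hCH : A ^ n = ∑ k : Fin n, c k • A ^ (k : ℕ)) (v : Fin n → ℝ) :
    obsMat n A v * A = shiftS n c * obsMat n A v := by
  ext k j
  have lhs : (obsMat n A v * A) k j = (v ᵥ* A ^ ((k : ℕ) + 1)) j := by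
    rw [pow_succ, ← vecMul_vecMul]
    simp [obsMat, mul_apply, vecMul, dotProduct]
  rw [lhs]
  by_cases h : (k : ℕ) + 1 < n
  · have : (shiftS n c * obsMat n A v) k j = obsMat n A v ⟨(k : ℕ) + 1, h⟩ j := by
      simp [shiftS, mul_apply, h, Finset.sum_ite_eq]
    rw [this]
    simp [obsMat]
  · have hk : (k : ℕ) + 1 = n := by omega
    have : (shiftS n c * obsMat n A v) k j = ∑ i : Fin n, c i * (v ᵥ* A ^ (i : ℕ)) j := by
      simp [shiftS, mul_apply, h, obsMat]
    rw [this, hk, hCH]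
    simp [vecMul, dotProduct, Finset.mul_sum, Matrix.sum_apply]
    rw [Finset.sum_comm]
    apply Finset.sum_congr rfl
    intro i _
    apply Finset.sum_congr rfl
    intro l _
    ring

theorem stmt_10 (n : ℕ) (A : Matrix (Fin n) (Fin n) ℝ)
    (B C : Fin n → ℝ)
    (hOB : IsUnit (obsMat n A B).det) (hOC : IsUnit (obsMat n A C).det)
    -- A satisfies its own characteristic polynomial, so Aⁿ is a combination of lower powers
    (hCH : ∃ c : Fin n → ℝ, A ^ n = ∑ k : Fin n, c k • A ^ (k : ℕ))
    (T : Matrix (Fin n) (Fin n) ℝ)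
    (hT : T = (obsMat n A B)⁻¹ * obsMat n A C) :
    B ᵥ* T = C ∧ T * A = A * T := by
  subst hT
  rcases Nat.eq_zero_or_pos n with hn | hn
  · subst hn
    constructor
    · funext i; exact i.elim0
    · ext i j; exact i.elim0
  obtain ⟨c, hc⟩ := hCH
  have hSB := shift_mul n A c hc B
  have hSC := shift_mul n A c hc C
  constructor
  · set O := obsMat n A B with hO
    have hB : B = Pi.single (⟨0, hn⟩ : Fin n) 1 ᵥ* O := by
      rw [single_one_vecMul]
      funext j
      simp [hO, obsMat]
    have h1 : B ᵥ* O⁻¹ = Pi.single (⟨0, hn⟩ : Fin n) 1 := by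
      rw [hB, Matrix.vecMul_vecMul, Matrix.mul_nonsing_inv _ hOB, Matrix.vecMul_one]
    rw [← Matrix.vecMul_vecMul, h1, single_one_vecMul]
    funext j
    simp [obsMat]
  · have key : (obsMat n A B)⁻¹ * shiftS n c * obsMat n A B = A := by
      rw [Matrix.mul_assoc, ← hSB, ← Matrix.mul_assoc, Matrix.nonsing_inv_mul _ hOB, one_mul]
    calc (obsMat n A B)⁻¹ * obsMat n A C * A
        = (obsMat n A B)⁻¹ * (obsMat n A C * A) := by rw [Matrix.mul_assoc]
      _ = (obsMat n A B)⁻¹ * (shiftS n c * obsMat n A C) := by rw [hSC]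
      _ = (obsMat n A B)⁻¹ * shiftS n c * (obsMat n A B * ((obsMat n A B)⁻¹ * obsMat n A C)) := by
          rw [← Matrix.mul_assoc (obsMat n A B), Matrix.mul_nonsing_inv _ hOB, one_mul,
            Matrix.mul_assoc]
      _ = A * ((obsMat n A B)⁻¹ * obsMat n A C) := by
          rw [← Matrix.mul_assoc, key]
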